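/- For all integers n ≥ 0, d_3(5n+3) ≡ 0 (mod 5) and d_3(5n+4) ≡ 0 (mod 5). -/

import Mathlib

/-!
Modulo 5, `(1 - q^i)^10 ≡ (1 - q^(5i))^2`, so the generating function `f₂³ / f₁¹⁰` of `d₃` is
`f₂³ = ∏ (1 - q^(2i))³` times a power series in `q⁵`. By Jacobi's identity
`f₁³ = ∑ (-1)^k (2k+1) q^(k(k+1)/2)`, the series `f₁³` is supported on triangular numbers `T`,
and `2T mod 5 ∈ {0, 1, 2}`, so `f₂³` has no terms in degrees `≡ 3, 4 (mod 5)`.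

Only this support statement is needed, and it is proved in finite form. By the `q`-binomial
theorem, the `m`-th `z`-coefficient of `∏_{j=1}^N (q^j + z) · (1 + z) · ∏_{j=1}^N (1 + q^j z)` is
`q^T [2N+1, m]_q` with `T` triangular, while its `z`-derivative at `z = -1` is `±(q;q)_N²`.
Multiplying by `(q;q)_N` turns each `[2N+1, m]_q` into `1` up to high order, so the coefficients
of `(q;q)_N³` below degree `N` vanish off the triangular numbers.
-/

/-- `elongatedDiamond k n` (written `d_k(n)` in the paper) is the coefficient of `q^n` in the
formal power series `∏_{i ≥ 1} (1 - q^(2i))^k / ∏_{i ≥ 1} (1 - q^i)^(3k+1)`.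
Since every factor with index `i > n` is congruent to `1` modulo `q^(n+1)`, this coefficient
equals the coefficient of `q^n` in the finite product over `1 ≤ i ≤ n`. -/
noncomputable def elongatedDiamond (k n : ℕ) : ℤ :=
  PowerSeries.coeff (R := ℤ) n
    (∏ i ∈ Finset.Icc 1 n,
      ((1 - (PowerSeries.X : PowerSeries ℤ) ^ (2 * i)) ^ k *
        (PowerSeries.invOfUnit (1 - (PowerSeries.X : PowerSeries ℤ) ^ i) 1) ^ (3 * k + 1)))

open Finset

lemma Nat.le_choose_two_add_one (i : ℕ) : i ≤ i.choose 2 + 1 := by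
  cases i with
  | zero => simp
  | succ i => rw [Nat.choose_succ_succ', Nat.choose_one_right]; omega

lemma Nat.sum_range_sub_eq_choose_two (N : ℕ) : ∑ j ∈ range N, (N - j) = (N + 1).choose 2 := by
  induction N with
  | zero => simp
  | succ N ih =>
    rw [sum_range_succ', Nat.choose_succ_succ' (N + 1), Nat.choose_one_right, ← ih]
    simp only [Nat.add_sub_add_right]
    omega

-- `j.choose 2` is `(m - N) * (m - N - 1) / 2` computed in `ℤ`.
lemma Nat.exists_choose_two_eq {N m k : ℕ} (h : m + k = 2 * N + 1) :
    ∃ j : ℕ, N * m + j.choose 2 = (N + 1).choose 2 + m.choose 2 ∧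
      N ≤ j.choose 2 + m ∧ N ≤ j.choose 2 + k := by
  rcases le_or_gt N m with hNm | hmN
  · obtain ⟨i, rfl⟩ := Nat.exists_eq_add_of_le hNm
    refine ⟨i, ?_, by omega, by have := i.le_choose_two_add_one; omega⟩
    apply Nat.cast_injective (R := ℚ)
    push_cast [Nat.cast_choose_two]
    ring
  · obtain ⟨i, rfl⟩ : ∃ i, N = m + i + 1 := ⟨N - m - 1, by omega⟩
    refine ⟨i + 2, ?_, ?_, by omega⟩
    · apply Nat.cast_injective (R := ℚ)
      push_cast [Nat.cast_choose_two]
      ring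
    · have := (i + 1).le_choose_two_add_one
      rw [Nat.choose_succ_succ' (i + 1), Nat.choose_one_right]
      omega

lemma Nat.two_mul_choose_two_ne_of_mod_five {a : ℕ} (ha : a % 5 = 3 ∨ a % 5 = 4) (j : ℕ) :
    2 * j.choose 2 ≠ a := by
  intro h
  cases j with
  | zero => rw [Nat.choose_zero_succ] at h; omega
  | succ j =>
    have h2 : 2 * (j + 1).choose 2 = (j + 1) * j := by
      have := Nat.add_one_mul_choose_eq j 1
      rw [Nat.choose_one_right] at this; linarith
    have key : ∀ x : ZMod 5, (x + 1) * x ≠ 3 ∧ (x + 1) * x ≠ 4 := by decide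
    have hcast : ((a % 5 : ℕ) : ZMod 5) = ((j : ZMod 5) + 1) * j := by
      rw [ZMod.natCast_mod, ← h, h2]; push_cast; ring
    rcases ha with ha | ha <;> rw [ha] at hcast
    · exact (key j).1 hcast.symm
    · exact (key j).2 hcast.symm

lemma Finset.prod_Icc_one_eq_prod_range {M : Type*} [CommMonoid M] (f : ℕ → M) (n : ℕ) :
    ∏ i ∈ Icc 1 n, f i = ∏ i ∈ range n, f (i + 1) := by
  rw [← Ico_add_one_right_eq_Icc, prod_Ico_eq_prod_range]
  simp [add_comm]

namespace Polynomial

variable {S : Type*} [CommRing S]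

lemma coeff_comp_C_mul_X (p : S[X]) (a : S) (m : ℕ) :
    (p.comp (C a * X)).coeff m = a ^ m * p.coeff m := by
  induction p using Polynomial.induction_on' with
  | add p r hp hr => simp [add_comp, hp, hr, mul_add]
  | monomial n b =>
    rw [monomial_comp, mul_pow, ← C_pow, ← mul_assoc, ← C_mul, coeff_C_mul_X_pow, coeff_monomial]
    split_ifs with h₁ h₂ h₂ <;> subst_vars <;> simp_all [mul_comm]

lemma eval_intCast_derivative_mem {G : AddSubgroup S} {p : S[X]}
    (h : ∀ m, p.coeff m ∈ G) (x : ℤ) : (derivative p).eval (x : S) ∈ G := by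
  rw [derivative_eval, Polynomial.sum_def]
  refine G.sum_mem fun m _ => ?_
  have hsmul : p.coeff m * m * (x : S) ^ (m - 1) = ((m * x ^ (m - 1) : ℤ)) • p.coeff m := by
    rw [zsmul_eq_mul]; push_cast; ring
  rw [hsmul]
  exact G.zsmul_mem (h m) _

end Polynomial

section QBinomial

open Polynomial

variable {S : Type*} [CommRing S] (q : S)

def qBinom : ℕ → ℕ → S
  | _, 0 => 1
  | 0, _ + 1 => 0
  | M + 1, m + 1 => qBinom M m + q ^ (m + 1) * qBinom M (m + 1)

def qPochhammer (M : ℕ) : S := ∏ i ∈ range M, (1 - q ^ (i + 1))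

@[simp] lemma qBinom_zero_right (M : ℕ) : qBinom q M 0 = 1 := by cases M <;> rfl

@[simp] lemma qBinom_zero_succ (m : ℕ) : qBinom q 0 (m + 1) = 0 := rfl

lemma qBinom_succ_succ (M m : ℕ) :
    qBinom q (M + 1) (m + 1) = qBinom q M m + q ^ (m + 1) * qBinom q M (m + 1) := rfl

lemma qBinom_eq_zero_of_lt : ∀ {M m : ℕ}, M < m → qBinom q M m = 0
  | 0, _ + 1, _ => rfl
  | M + 1, m + 1, h => by
    rw [qBinom_succ_succ, qBinom_eq_zero_of_lt (by omega), qBinom_eq_zero_of_lt (by omega)]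
    simp

@[simp] lemma qBinom_self : ∀ M : ℕ, qBinom q M M = 1
  | 0 => rfl
  | M + 1 => by rw [qBinom_succ_succ, qBinom_self M, qBinom_eq_zero_of_lt q (by omega)]; simp

@[simp] lemma qPochhammer_zero : qPochhammer q 0 = 1 := prod_range_zero _

lemma qPochhammer_succ (M : ℕ) : qPochhammer q (M + 1) = qPochhammer q M * (1 - q ^ (M + 1)) :=
  prod_range_succ _ _

theorem qBinom_add_mul_qPochhammer_mul_qPochhammer : ∀ m k : ℕ,
    qBinom q (m + k) m * qPochhammer q m * qPochhammer q k = qPochhammer q (m + k)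
  | 0, k => by simp
  | m + 1, 0 => by simp
  | m + 1, k + 1 => by
    have h₁ := qBinom_add_mul_qPochhammer_mul_qPochhammer m (k + 1)
    have h₂ := qBinom_add_mul_qPochhammer_mul_qPochhammer (m + 1) k
    rw [show m + 1 + (k + 1) = m + k + 1 + 1 by ring, qBinom_succ_succ] at *
    rw [show m + (k + 1) = m + k + 1 by ring] at h₁
    rw [show m + 1 + k = m + k + 1 by ring] at h₂
    rw [qPochhammer_succ q m, qPochhammer_succ q k, qPochhammer_succ q (m + k + 1)] at *
    linear_combination (1 - q ^ (m + 1)) * h₁ + q ^ (m + 1) * (1 - q ^ (k + 1)) * h₂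

theorem coeff_prod_one_add_C_mul_X (c : S) (M m : ℕ) :
    (∏ j ∈ range M, (1 + C (c * q ^ j) * X)).coeff m = c ^ m * q ^ m.choose 2 * qBinom q M m := by
  induction M generalizing c m with
  | zero => cases m <;> simp [coeff_one]
  | succ M ih =>
    rw [prod_range_succ']
    simp_rw [pow_succ', ← mul_assoc]
    rw [pow_zero, mul_one, mul_add, mul_one, coeff_add, ← mul_assoc, mul_comm _ (C c), mul_assoc,
      coeff_C_mul]
    cases m with
    | zero => rw [coeff_mul_X_zero, ih]; simp
    | succ m =>
      rw [coeff_mul_X, ih, ih, qBinom_succ_succ, Nat.choose_succ_succ', Nat.choose_one_right]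
      ring

end QBinomial

section Jacobi

open PowerSeries

variable {R : Type*} [CommRing R]

lemma X_pow_succ_dvd_qPochhammer_sub {K L : ℕ} (h : K ≤ L) :
    (X : R⟦X⟧) ^ (K + 1) ∣ qPochhammer X L - qPochhammer X K := by
  induction L, h using Nat.le_induction with
  | base => simp
  | succ L hKL ih =>
    rw [qPochhammer_succ, show qPochhammer X L * (1 - X ^ (L + 1)) - qPochhammer X K =
      (qPochhammer X L - qPochhammer X K) - X ^ (L + 1) * qPochhammer (X : R⟦X⟧) L by ring]
    exact dvd_sub ih ((pow_dvd_pow X (by omega)).mul_right _)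

lemma isUnit_qPochhammer (M : ℕ) : IsUnit (qPochhammer (X : R⟦X⟧) M) := by
  rw [isUnit_iff_constantCoeff, qPochhammer, map_prod]
  simp

lemma X_pow_succ_dvd_qBinom_mul_qPochhammer_sub_one {K m k L : ℕ} (hm : K ≤ m) (hk : K ≤ k)
    (hL : K ≤ L) : (X : R⟦X⟧) ^ (K + 1) ∣ qBinom X (m + k) m * qPochhammer X L - 1 := by
  set π := Ideal.Quotient.mk (Ideal.span {(X : R⟦X⟧) ^ (K + 1)})
  have hπ {j : ℕ} (hj : K ≤ j) : π (qPochhammer X j) = π (qPochhammer X K) :=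
    Ideal.Quotient.eq.mpr (Ideal.mem_span_singleton.mpr (X_pow_succ_dvd_qPochhammer_sub hj))
  have hunit : IsUnit (π (qPochhammer X K)) := (isUnit_qPochhammer K).map π
  have h := congrArg π (qBinom_add_mul_qPochhammer_mul_qPochhammer (X : R⟦X⟧) m k)
  rw [map_mul, map_mul, hπ hm, hπ hk, hπ (by omega : K ≤ m + k)] at h
  have hinv : π (qBinom X (m + k) m) * π (qPochhammer X K) = 1 :=
    hunit.mul_left_cancel (by linear_combination h)
  rw [← Ideal.mem_span_singleton, ← Ideal.Quotient.eq, map_mul, hπ hL, hinv, map_one]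

lemma coeff_X_pow_mul_qBinom_mul_qPochhammer_eq_zero {e n m k L : ℕ} (he : e ≠ n) (hm : n ≤ e + m)
    (hk : n ≤ e + k) (hL : n ≤ e + L) :
    coeff n ((X : R⟦X⟧) ^ e * qBinom X (m + k) m * qPochhammer X L) = 0 := by
  rw [mul_assoc, coeff_X_pow_mul']
  split_ifs with hen
  · have h := X_pow_dvd_iff.mp (X_pow_succ_dvd_qBinom_mul_qPochhammer_sub_one (R := R)
      (by omega : n - e ≤ m) (by omega : n - e ≤ k) (by omega : n - e ≤ L)) (n - e) (by omega)
    rwa [map_sub, coeff_one, if_neg (by omega), sub_zero] at h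
  · rfl

noncomputable def tripleProductPoly (N : ℕ) : Polynomial R⟦X⟧ :=
  (∏ j ∈ range N, (Polynomial.C (X ^ (j + 1)) + Polynomial.X)) * (1 + Polynomial.X) *
    ∏ j ∈ range N, (1 + Polynomial.C (X ^ (j + 1)) * Polynomial.X)

lemma tripleProductPoly_comp (N : ℕ) :
    (tripleProductPoly N).comp (Polynomial.C (X ^ N) * Polynomial.X) =
      Polynomial.C ((X : R⟦X⟧) ^ (N + 1).choose 2) *
        ∏ j ∈ range (2 * N + 1), (1 + Polynomial.C (X ^ j) * Polynomial.X) := by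
  have hrev : ∏ j ∈ range N, (Polynomial.C (X ^ (j + 1)) + Polynomial.C (X ^ N) * Polynomial.X) =
      Polynomial.C ((X : R⟦X⟧) ^ (N + 1).choose 2) *
        ∏ j ∈ range N, (1 + Polynomial.C (X ^ j) * Polynomial.X) := by
    have hfac : ∀ j ∈ range N,
        Polynomial.C (X ^ (N - 1 - j + 1)) + Polynomial.C (X ^ N) * Polynomial.X =
          Polynomial.C ((X : R⟦X⟧) ^ (N - j)) * (1 + Polynomial.C (X ^ j) * Polynomial.X) := by
      intro j hj
      rw [mem_range] at hj
      rw [mul_add, mul_one, ← mul_assoc, ← Polynomial.C_mul, ← pow_add, Nat.sub_add_cancel hj.le,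
        show N - 1 - j + 1 = N - j by omega]
    rw [← prod_range_reflect, prod_congr rfl hfac, prod_mul_distrib, ← map_prod,
      prod_pow_eq_pow_sum, Nat.sum_range_sub_eq_choose_two]
  simp only [tripleProductPoly, Polynomial.mul_comp, Polynomial.prod_comp, Polynomial.add_comp,
    Polynomial.C_comp, Polynomial.X_comp, Polynomial.one_comp, hrev]
  have hshift : ∀ j ∈ range N,
      1 + Polynomial.C (X ^ (j + 1)) * (Polynomial.C (X ^ N) * Polynomial.X) =
        1 + Polynomial.C ((X : R⟦X⟧) ^ (N + (j + 1))) * Polynomial.X := fun j _ => by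
    rw [← mul_assoc, ← Polynomial.C_mul, ← pow_add, add_comm N]
  rw [show 2 * N + 1 = N + (N + 1) by ring, prod_range_add, prod_range_succ', prod_congr rfl hshift,
    add_zero]
  ring

lemma X_pow_mul_coeff_tripleProductPoly (N m : ℕ) :
    X ^ (N * m) * (tripleProductPoly N).coeff m =
      (X : R⟦X⟧) ^ ((N + 1).choose 2 + m.choose 2) * qBinom X (2 * N + 1) m := by
  have h := congrArg (Polynomial.coeff · m) (tripleProductPoly_comp (R := R) N)
  have hq := coeff_prod_one_add_C_mul_X (X : R⟦X⟧) 1 (2 * N + 1) m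
  simp only [one_mul, one_pow] at hq
  simp only [Polynomial.coeff_comp_C_mul_X, Polynomial.coeff_C_mul, hq] at h
  rw [pow_mul, h, pow_add, mul_assoc]

lemma coeff_coeff_tripleProductPoly_mul_qPochhammer_eq_zero {n N : ℕ} (hnN : n ≤ N)
    (hn : ∀ j : ℕ, j.choose 2 ≠ n) (m : ℕ) :
    coeff n ((tripleProductPoly N).coeff m * qPochhammer (X : R⟦X⟧) N) = 0 := by
  have hX := X_pow_mul_coeff_tripleProductPoly (R := R) N m
  rcases le_or_gt m (2 * N + 1) with hm | hm
  · obtain ⟨k, hk⟩ := Nat.exists_eq_add_of_le hm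
    obtain ⟨j, hj, hjm, hjk⟩ := Nat.exists_choose_two_eq hk.symm
    rw [hk, ← hj, pow_add, mul_assoc] at hX
    rw [X_pow_mul_cancel hX]
    exact coeff_X_pow_mul_qBinom_mul_qPochhammer_eq_zero (hn j) (by omega) (by omega) (by omega)
  · rw [qBinom_eq_zero_of_lt _ hm, mul_zero, ← mul_zero (X ^ (N * m))] at hX
    rw [X_pow_mul_cancel hX, zero_mul, map_zero]

lemma eval_neg_one_derivative_tripleProductPoly (N : ℕ) :
    (Polynomial.derivative (tripleProductPoly N)).eval (-1) =
      (-1) ^ N * qPochhammer (X : R⟦X⟧) N ^ 2 := by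
  rw [tripleProductPoly, mul_right_comm, Polynomial.derivative_mul]
  simp only [Polynomial.eval_add, Polynomial.eval_mul, Polynomial.eval_prod, Polynomial.eval_C,
    Polynomial.eval_X, Polynomial.eval_one, Polynomial.derivative_add, Polynomial.derivative_one,
    Polynomial.derivative_X, add_neg_cancel, mul_zero, mul_one, zero_add, mul_neg_one,
    ← sub_eq_add_neg]
  rw [prod_congr rfl fun j _ => (neg_sub 1 (X ^ (j + 1) : R⟦X⟧)).symm, prod_neg, card_range,
    qPochhammer]
  ring

theorem coeff_qPochhammer_pow_three_eq_zero {n N : ℕ} (hnN : n ≤ N)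
    (hn : ∀ j : ℕ, j.choose 2 ≠ n) :
    coeff n (qPochhammer (X : R⟦X⟧) N ^ 3) = 0 := by
  let ℓ : R⟦X⟧ →+ R := (coeff n).toAddMonoidHom.comp (AddMonoidHom.mulRight (qPochhammer X N))
  have h := Polynomial.eval_intCast_derivative_mem (G := ℓ.ker)
    (coeff_coeff_tripleProductPoly_mul_qPochhammer_eq_zero hnN hn) (-1)
  simp only [ℓ, eval_neg_one_derivative_tripleProductPoly, Int.cast_neg, Int.cast_one,
    AddMonoidHom.mem_ker, AddMonoidHom.coe_comp, Function.comp_apply, AddMonoidHom.coe_mulRight,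
    LinearMap.toAddMonoidHom_coe, mul_assoc, ← pow_succ] at h
  rcases neg_one_pow_eq_or R⟦X⟧ N with hN | hN <;> simpa [hN] using h

end Jacobi

section Congruence

open PowerSeries

theorem PowerSeries.coeff_mul_expand_eq_zero {R : Type*} [CommRing R] {p : ℕ} (hp : p ≠ 0)
    {φ ψ : R⟦X⟧} {n : ℕ} (h : ∀ i ≤ n, i ≡ n [MOD p] → coeff i φ = 0) :
    coeff n (φ * expand p hp ψ) = 0 := by
  rw [coeff_mul]
  refine sum_eq_zero ?_
  rintro ⟨i, j⟩ hij
  rw [HasAntidiagonal.mem_antidiagonal] at hij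
  by_cases hj : p ∣ j
  · obtain ⟨t, rfl⟩ := hj
    rw [h i (by omega) (hij ▸ (Nat.add_mul_mod_self_left i p t).symm), zero_mul]
  · rw [coeff_expand_of_not_dvd p hp ψ hj, mul_zero]

theorem PowerSeries.expand_card_zmod (p : ℕ) [Fact p.Prime] (f : (ZMod p)⟦X⟧) :
    expand p (Fact.out : p.Prime).ne_zero f = f ^ p := by
  rw [← MvPowerSeries.map_frobenius_expand p (Fact.out : p.Prime).ne_zero, ZMod.frobenius_zmod,
    MvPowerSeries.map_id]
  rfl

lemma coeff_expand_two_qPochhammer_pow_three_eq_zero {R : Type*} [CommRing R] {i N : ℕ}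
    (hiN : i ≤ N) (hi : i % 5 = 3 ∨ i % 5 = 4) :
    coeff i (expand 2 two_ne_zero (qPochhammer (X : R⟦X⟧) N ^ 3)) = 0 := by
  rw [coeff_expand]
  split_ifs with h2
  · obtain ⟨b, rfl⟩ := h2
    rw [Nat.mul_div_cancel_left b two_pos]
    exact coeff_qPochhammer_pow_three_eq_zero (by omega) fun j hj =>
      Nat.two_mul_choose_two_ne_of_mod_five hi j (by rw [hj])
  · rfl

lemma expand_two_qPochhammer {R : Type*} [CommRing R] (N : ℕ) :
    expand 2 two_ne_zero (qPochhammer (X : R⟦X⟧) N) = ∏ i ∈ Icc 1 N, (1 - X ^ (2 * i)) := by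
  simp [qPochhammer, prod_Icc_one_eq_prod_range, map_prod, ← pow_mul, mul_comm]

noncomputable def elongatedDiamondProduct (R : Type*) [CommRing R] (k n : ℕ) : R⟦X⟧ :=
  ∏ i ∈ Icc 1 n, ((1 - X ^ (2 * i)) ^ k * invOfUnit (1 - X ^ i) 1 ^ (3 * k + 1))

lemma elongatedDiamondProduct_mul {R : Type*} [CommRing R] (k n : ℕ) :
    elongatedDiamondProduct R k n * ∏ i ∈ Icc 1 n, (1 - X ^ i) ^ (3 * k + 1) =
      ∏ i ∈ Icc 1 n, (1 - X ^ (2 * i)) ^ k := by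
  rw [elongatedDiamondProduct, ← prod_mul_distrib]
  refine prod_congr rfl fun i hi => ?_
  have hi0 : i ≠ 0 := by rw [mem_Icc] at hi; omega
  rw [mul_assoc, ← mul_pow, invOfUnit_mul _ _ (by simp [hi0]), one_pow, mul_one]

lemma map_elongatedDiamondProduct_three (N : ℕ) :
    map (Int.castRingHom (ZMod 5)) (elongatedDiamondProduct ℤ 3 N) =
      expand 2 two_ne_zero (qPochhammer X N ^ 3) *
        expand 5 (by norm_num) (invOfUnit (qPochhammer X N ^ 2) 1) := by
  have : Fact (Nat.Prime 5) := ⟨by norm_num⟩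
  set P := qPochhammer (X : (ZMod 5)⟦X⟧) N with hP
  have h10 : map (Int.castRingHom (ZMod 5)) (∏ i ∈ Icc 1 N, (1 - X ^ i) ^ (3 * 3 + 1)) =
      expand 5 (by norm_num) (P ^ 2) := by
    rw [expand_card_zmod, ← pow_mul, hP, qPochhammer, ← prod_Icc_one_eq_prod_range (1 - X ^ ·),
      prod_pow]
    simp [map_prod]
  have h3 : map (Int.castRingHom (ZMod 5)) (∏ i ∈ Icc 1 N, (1 - X ^ (2 * i)) ^ 3) =
      expand 2 two_ne_zero (P ^ 3) := by
    rw [map_pow, expand_two_qPochhammer, prod_pow]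
    simp [map_prod]
  have h := congrArg (map (Int.castRingHom (ZMod 5))) (elongatedDiamondProduct_mul 3 N)
  rw [map_mul, h10, h3] at h
  have hinv : P ^ 2 * invOfUnit (P ^ 2) 1 = 1 := mul_invOfUnit _ _ (by simp [hP, qPochhammer])
  rw [← h, mul_assoc, ← map_mul, hinv, map_one, mul_one]

theorem five_dvd_elongatedDiamond_three {N : ℕ} (hN : N % 5 = 3 ∨ N % 5 = 4) :
    (5 : ℤ) ∣ elongatedDiamond 3 N := by
  have hcast : (elongatedDiamond 3 N : ZMod 5) =
      coeff N (map (Int.castRingHom (ZMod 5)) (elongatedDiamondProduct ℤ 3 N)) := by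
    rw [coeff_map]; rfl
  rw [← Nat.cast_ofNat, ← ZMod.intCast_zmod_eq_zero_iff_dvd, hcast,
    map_elongatedDiamondProduct_three]
  exact coeff_mul_expand_eq_zero _ fun i hiN hi =>
    coeff_expand_two_qPochhammer_pow_three_eq_zero hiN (by unfold Nat.ModEq at hi; omega)

end Congruence

theorem d3_mod5_pair (n : ℕ) :
    (5 : ℤ) ∣ elongatedDiamond 3 (5 * n + 3) ∧ (5 : ℤ) ∣ elongatedDiamond 3 (5 * n + 4) :=
  ⟨five_dvd_elongatedDiamond_three (by omega), five_dvd_elongatedDiamond_three (by omega)⟩
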